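/- arXiv:1910.12350 — 5 statements merged into one kernel-verified Lean document; each statement's English description precedes it below -/
import Mathlib

section
/- Let D be a triangulated category, Γ a finite rank abelian group, cl : K₀(D) → Γ a group homomorphism, and σ = (Z, P) a Bridgeland stability condition on D with respect to cl (in particular σ satisfies the support property). Suppose the autoequivalence Φ of D is DHKK pseudo-Anosov at σ with stretch factor λ > 1. Then for every σ-semistable object A (i.e., every nonzero A ∈ P(φ) for some φ ∈ ℝ), the limit lim_{n→∞} (1/n)·log |Z(Φⁿ A)| exists and equals log λ; in particular it never equals −log λ. -/
/-!
STATEMENT 1: If `Φ` is DHKK pseudo-Anosov at a Bridgeland stability condition `σ` with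
stretch factor `λ > 1`, then for every `σ`-semistable object `A` (nonzero `A ∈ P(φ)`),
`lim_{n→∞} (1/n)·log |Z(Φⁿ A)|` exists and equals `log λ`; in particular it never
equals `−log λ`.
-/

open CategoryTheory CategoryTheory.Limits CategoryTheory.Pretriangulated Filter ZeroObject
open scoped ENNReal TensorProduct

noncomputable section

universe v u

variable (C : Type u) [Category.{v} C] [Preadditive C] [HasZeroObject C]
  [HasShift C ℤ] [∀ n : ℤ, (shiftFunctor C n).Additive] [Pretriangulated C] [HasBinaryBiproducts C]
  (Γ : Type*) [AddCommGroup Γ] [Module.Free ℤ Γ] [Module.Finite ℤ Γ] (cl : C → Γ)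

/-- A Bridgeland stability condition `σ = (Z, P)` with respect to `cl : K₀(D) → Γ`
(we encode the homomorphism from `K₀(D)` as a function `cl` on objects which is additive
on distinguished triangles). Fields `phiPlus`, `phiMinus`, `mass` record the phases
`φ⁺_σ, φ⁻_σ` and the mass `m_σ`, computed from Harder--Narasimhan filtrations. -/
structure BridgelandStab where
  /-- The central charge `Z : Γ → ℂ`. -/
  Z : Γ →+ ℂ
  /-- The slicing: strictly full additive subcategories `P(φ)`. -/
  P : ℝ → Set C
  P_iso : ∀ (φ : ℝ) ⦃E F : C⦄, (E ≅ F) → E ∈ P φ → F ∈ P φ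
  P_zero_mem : ∀ φ : ℝ, (0 : C) ∈ P φ
  P_add : ∀ (φ : ℝ) ⦃E F : C⦄, E ∈ P φ → F ∈ P φ → (E ⊞ F) ∈ P φ
  /-- (i) `Z(E) ∈ ℝ_{>0}·exp(iπφ)` for nonzero `E ∈ P(φ)`. -/
  ray : ∀ (φ : ℝ) (E : C), E ∈ P φ → ¬ IsZero E →
    ∃ r : ℝ, 0 < r ∧ Z (cl E) = (r : ℂ) * Complex.exp ((Real.pi * φ : ℝ) * Complex.I)
  /-- (ii) `P(φ+1) = P(φ)[1]`. -/
  shift : ∀ (φ : ℝ) (E : C), E ∈ P (φ + 1) ↔ ∃ F ∈ P φ, Nonempty (E ≅ F⟦(1:ℤ)⟧)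
  /-- (iii) `Hom(A₁, A₂) = 0` for `A_i ∈ P(φ_i)`, `φ₁ > φ₂`. -/
  hom_vanish : ∀ (φ₁ φ₂ : ℝ) (A₁ A₂ : C), φ₂ < φ₁ → A₁ ∈ P φ₁ → A₂ ∈ P φ₂ →
    ∀ f : A₁ ⟶ A₂, f = 0
  phiPlus : C → ℝ
  phiMinus : C → ℝ
  mass : C → ℝ
  mass_zero : ∀ E : C, IsZero E → mass E = 0
  /-- (iv) Harder--Narasimhan filtrations, computing `φ⁺`, `φ⁻` and the mass `m_σ`. -/
  HN : ∀ E : C, ¬ IsZero E → ∃ (n : ℕ) (X : Fin (n + 2) → C) (A : Fin (n + 1) → C)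
      (φ : Fin (n + 1) → ℝ),
    IsZero (X 0) ∧ Nonempty (X (Fin.last (n + 1)) ≅ E) ∧ StrictAnti φ ∧
    (∀ i : Fin (n + 1), ∃ (f : X i.castSucc ⟶ X i.succ) (g : X i.succ ⟶ A i)
      (h : A i ⟶ (X i.castSucc)⟦(1:ℤ)⟧), Triangle.mk f g h ∈ distTriang C) ∧
    (∀ i : Fin (n + 1), A i ∈ P (φ i) ∧ ¬ IsZero (A i)) ∧
    phiPlus E = φ 0 ∧ phiMinus E = φ (Fin.last n) ∧
    mass E = ∑ i : Fin (n + 1), ‖Z (cl (A i))‖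
  /-- (v) the support property, for a norm on `Γ ⊗ ℝ`. -/
  support : ∃ c : ℝ, 0 < c ∧ ∃ ν : (ℝ ⊗[ℤ] Γ) → ℝ,
    (∀ x, 0 ≤ ν x) ∧ (∀ x, ν x = 0 ↔ x = 0) ∧
    (∀ (r : ℝ) (x), ν (r • x) = |r| * ν x) ∧
    (∀ x y, ν (x + y) ≤ ν x + ν y) ∧
    ∀ (φ : ℝ) (E : C), E ∈ P φ → ¬ IsZero E →
      ν ((1 : ℝ) ⊗ₜ[ℤ] (cl E)) ≤ c * ‖Z (cl E)‖

variable {C Γ cl}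

/-- `Φ` is DHKK pseudo-Anosov at `σ` with stretch factor `lam > 1`: there are an increasing
`f : ℝ → ℝ` with `f(φ+1) = f(φ)+1` and `T = diag(1/λ, λ)` or `diag(λ, 1/λ)` (identifying
`ℂ ≅ ℝ²`) with `Z(ΦE) = T(Z(E))` for all `E` and `Φ(P(φ)) = P(f(φ))` for all `φ`. -/
def IsDHKKPseudoAnosov (σ : BridgelandStab C Γ cl) (Φ : C ≌ C) (lam : ℝ) : Prop :=
  1 < lam ∧ ∃ f : ℝ → ℝ, Monotone f ∧ (∀ φ : ℝ, f (φ + 1) = f φ + 1) ∧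
    ((∀ E : C, (σ.Z (cl (Φ.functor.obj E))).re = lam⁻¹ * (σ.Z (cl E)).re ∧
               (σ.Z (cl (Φ.functor.obj E))).im = lam * (σ.Z (cl E)).im) ∨
     (∀ E : C, (σ.Z (cl (Φ.functor.obj E))).re = lam * (σ.Z (cl E)).re ∧
               (σ.Z (cl (Φ.functor.obj E))).im = lam⁻¹ * (σ.Z (cl E)).im)) ∧
    (∀ (φ : ℝ) (E : C), E ∈ σ.P (f φ) ↔ ∃ F ∈ σ.P φ, Nonempty (E ≅ Φ.functor.obj F))

/-- `log` with values in `EReal`, with the convention `log 0 = ⊥`. -/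
def elog (x : ℝ) : EReal := if x = 0 then ⊥ else ((Real.log x : ℝ) : EReal)

/-!
`Φ` acts on central charges by the hyperbolic matrix `T`, so `‖Z(Φⁿ A)‖` is squeezed between
`b λⁿ` and `a λ⁻ⁿ + b λⁿ`, where `a` and `b` are the absolute values of the contracted and the
expanded coordinate of `Z(A)`. The objects `Φⁿ A` stay semistable, and the support property
together with the discreteness of `Γ` keeps their charges away from `0`; this forces `b > 0`,
and then `‖Z(Φⁿ A)‖` grows exactly like `λⁿ`.
-/

open Topology

theorem tendsto_inv_mul_log_of_le_of_le {u : ℕ → ℝ} {c₁ c₂ lam : ℝ} (hc₁ : 0 < c₁)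
    (hlam : 0 < lam) (h_lower : ∀ n, c₁ * lam ^ n ≤ u n) (h_upper : ∀ n, u n ≤ c₂ * lam ^ n) :
    Tendsto (fun n : ℕ => (n : ℝ)⁻¹ * Real.log (u n)) atTop (𝓝 (Real.log lam)) := by
  have h_geom : ∀ c > 0, Tendsto (fun n : ℕ => (n : ℝ)⁻¹ * Real.log (c * lam ^ n)) atTop
      (𝓝 (Real.log lam)) := fun c hc => by
    have h_lim := (tendsto_inv_atTop_nhds_zero_nat.mul_const (Real.log c)).add_const (Real.log lam)
    rw [zero_mul, zero_add] at h_lim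
    refine h_lim.congr' ?_
    filter_upwards [eventually_ne_atTop 0] with n hn
    rw [Real.log_mul hc.ne' (by positivity), Real.log_pow]
    field_simp
  have hc₂ : 0 < c₂ := hc₁.trans_le (by simpa using (h_lower 0).trans (h_upper 0))
  have h_pos n : 0 < u n := (by positivity : 0 < c₁ * lam ^ n).trans_le (h_lower n)
  refine tendsto_of_tendsto_of_tendsto_of_le_of_le (h_geom c₁ hc₁) (h_geom c₂ hc₂)
    (fun n => ?_) (fun n => ?_)
  · dsimp only
    gcongr
    exact h_lower n
  · dsimp only
    gcongr
    · exact h_pos n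
    · exact h_upper n

theorem exists_pos_le_of_tmul_ne_zero {Γ : Type*} [AddCommGroup Γ] [Module.Free ℤ Γ]
    [Module.Finite ℤ Γ] (ν : ℝ ⊗[ℤ] Γ → ℝ) (hν_eq_zero : ∀ x, ν x = 0 ↔ x = 0)
    (hν_smul : ∀ (r : ℝ) (x), ν (r • x) = |r| * ν x) (hν_add : ∀ x y, ν (x + y) ≤ ν x + ν y) :
    ∃ ε : ℝ, 0 < ε ∧ ∀ g : Γ, g ≠ 0 → ε ≤ ν ((1 : ℝ) ⊗ₜ[ℤ] g) := by
  -- `ν` is a norm on a finite-dimensional space, so the coordinates in a basis coming from `Γ`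
  -- are bounded by a multiple of `ν`, while those of a nonzero lattice vector are integers.
  let _ : NormedAddCommGroup (ℝ ⊗[ℤ] Γ) := AddGroupNorm.toNormedAddCommGroup
    { toFun := ν
      map_zero' := (hν_eq_zero 0).2 rfl
      add_le' := hν_add
      neg' := fun x => by rw [← neg_one_smul ℝ x, hν_smul, abs_neg, abs_one, one_mul]
      eq_zero_of_map_eq_zero' := fun x => (hν_eq_zero x).1 }
  let _ : NormedSpace ℝ (ℝ ⊗[ℤ] Γ) := ⟨fun r x => (hν_smul r x).le⟩
  let b := Module.Free.chooseBasis ℤ Γ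
  let coords := (Algebra.TensorProduct.basis ℝ b).equivFun.toLinearMap.toContinuousLinearMap
  refine ⟨(‖coords‖ + 1)⁻¹, by positivity, fun g hg => ?_⟩
  obtain ⟨i, hi⟩ : ∃ i, b.repr g i ≠ 0 := by
    by_contra! h
    exact hg (b.ext_elem fun i => by simpa using h i)
  have h_one_le : 1 ≤ ‖coords ((1 : ℝ) ⊗ₜ[ℤ] g)‖ := calc
    (1 : ℝ) ≤ |(b.repr g i : ℝ)| := by exact_mod_cast Int.one_le_abs hi
    _ = ‖coords ((1 : ℝ) ⊗ₜ[ℤ] g) i‖ := by simp [coords, Algebra.TensorProduct.basis_repr_tmul]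
    _ ≤ _ := norm_le_pi_norm _ i
  have h_nonneg : 0 ≤ ν ((1 : ℝ) ⊗ₜ[ℤ] g) := norm_nonneg ((1 : ℝ) ⊗ₜ[ℤ] g)
  rw [inv_le_iff_one_le_mul₀ (by positivity)]
  calc 1 ≤ ‖coords‖ * ν ((1 : ℝ) ⊗ₜ[ℤ] g) := h_one_le.trans (coords.le_opNorm _)
    _ ≤ _ := by nlinarith

theorem CategoryTheory.Equivalence.not_isZero_iterate_obj {D : Type*} [Category D]
    (Φ : D ≌ D) {A : D} (hA : ¬ IsZero A) (n : ℕ) : ¬ IsZero (Φ.functor.obj^[n] A) := by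
  induction n with
  | zero => exact hA
  | succ n ih =>
    rw [Function.iterate_succ_apply']
    exact fun h => ih (IsZero.of_full_of_faithful_of_isZero Φ.functor _ h)

theorem iterate_apply_eq_pow_mul {α : Type*} {F : α → α} {g : α → ℝ} {c : ℝ}
    (h : ∀ x, g (F x) = c * g x) (n : ℕ) (x : α) : g (F^[n] x) = c ^ n * g x := by
  rw [(Function.Semiconj.iterate_right h n x), mul_left_iterate]

namespace BridgelandStab

variable (σ : BridgelandStab C Γ cl)

omit [Module.Free ℤ Γ] [Module.Finite ℤ Γ] in
theorem Z_ne_zero {φ : ℝ} {E : C} (hE : E ∈ σ.P φ) (hE₀ : ¬ IsZero E) : σ.Z (cl E) ≠ 0 := by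
  obtain ⟨r, hr, hZ⟩ := σ.ray φ E hE hE₀
  rw [hZ]
  exact mul_ne_zero (by exact_mod_cast hr.ne') (Complex.exp_ne_zero _)

theorem exists_pos_le_norm_Z :
    ∃ δ : ℝ, 0 < δ ∧ ∀ (φ : ℝ) (E : C), E ∈ σ.P φ → ¬ IsZero E → δ ≤ ‖σ.Z (cl E)‖ := by
  obtain ⟨c, hc, ν, -, hν_eq_zero, hν_smul, hν_add, h_support⟩ := σ.support
  obtain ⟨ε, hε, h_le⟩ := exists_pos_le_of_tmul_ne_zero ν hν_eq_zero hν_smul hν_add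
  refine ⟨ε / c, div_pos hε hc, fun φ E hE hE₀ => ?_⟩
  have hcl : cl E ≠ 0 := fun h => σ.Z_ne_zero hE hE₀ (by rw [h, map_zero])
  rw [div_le_iff₀' hc]
  exact (h_le _ hcl).trans (h_support φ E hE hE₀)

end BridgelandStab

namespace IsDHKKPseudoAnosov

variable {σ : BridgelandStab C Γ cl} {Φ : C ≌ C} {lam : ℝ}

omit [Module.Free ℤ Γ] [Module.Finite ℤ Γ]

theorem exists_iterate_mem_P (hΦ : IsDHKKPseudoAnosov σ Φ lam) {φ : ℝ} {A : C}
    (hA : A ∈ σ.P φ) (n : ℕ) : ∃ ψ, Φ.functor.obj^[n] A ∈ σ.P ψ := by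
  obtain ⟨-, f, -, -, -, hP⟩ := hΦ
  refine ⟨f^[n] φ, ?_⟩
  induction n with
  | zero => exact hA
  | succ n ih =>
    rw [Function.iterate_succ_apply', Function.iterate_succ_apply']
    exact (hP _ _).2 ⟨_, ih, ⟨Iso.refl _⟩⟩

theorem exists_norm_Z_iterate_bounds (hΦ : IsDHKKPseudoAnosov σ Φ lam) (E : C) :
    ∃ a b : ℝ, 0 ≤ a ∧ 0 ≤ b ∧ ∀ n : ℕ,
      b * lam ^ n ≤ ‖σ.Z (cl (Φ.functor.obj^[n] E))‖ ∧
      ‖σ.Z (cl (Φ.functor.obj^[n] E))‖ ≤ a * lam⁻¹ ^ n + b * lam ^ n := by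
  obtain ⟨hlam, -, -, -, hT, -⟩ := hΦ
  have hlam₀ : 0 < lam := one_pos.trans hlam
  let w (n : ℕ) : ℂ := σ.Z (cl (Φ.functor.obj^[n] E))
  have h_iterate {c : ℝ} (hc : 0 < c) {g : ℂ → ℝ} (hg : ∀ E, g (σ.Z (cl (Φ.functor.obj E))) =
      c * g (σ.Z (cl E))) (n : ℕ) : |g (w n)| = |g (w 0)| * c ^ n := by
    rw [iterate_apply_eq_pow_mul (g := fun E => g (σ.Z (cl E))) hg, abs_mul,
      abs_of_pos (pow_pos hc n), mul_comm]
    rfl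
  rcases hT with hT | hT
  · refine ⟨|(w 0).re|, |(w 0).im|, abs_nonneg _, abs_nonneg _, fun n => ⟨?_, ?_⟩⟩
    · rw [← h_iterate hlam₀ (fun E => (hT E).2)]
      exact Complex.abs_im_le_norm (w n)
    · rw [← h_iterate hlam₀ (fun E => (hT E).2),
        ← h_iterate (inv_pos.2 hlam₀) (fun E => (hT E).1)]
      exact Complex.norm_le_abs_re_add_abs_im (w n)
  · refine ⟨|(w 0).im|, |(w 0).re|, abs_nonneg _, abs_nonneg _, fun n => ⟨?_, ?_⟩⟩
    · rw [← h_iterate hlam₀ (fun E => (hT E).1)]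
      exact Complex.abs_re_le_norm (w n)
    · rw [← h_iterate hlam₀ (fun E => (hT E).1),
        ← h_iterate (inv_pos.2 hlam₀) (fun E => (hT E).2), add_comm]
      exact Complex.norm_le_abs_re_add_abs_im (w n)

end IsDHKKPseudoAnosov

theorem charge_growth_of_semistable_general
    (σ : BridgelandStab C Γ cl) (Φ : C ≌ C) (lam : ℝ)
    (hΦ : IsDHKKPseudoAnosov σ Φ lam) :
    ∀ (φ : ℝ) (A : C), A ∈ σ.P φ → ¬ IsZero A →
      Filter.Tendsto
        (fun n : ℕ => (n : ℝ)⁻¹ *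
          Real.log (‖σ.Z (cl ((Φ.functor.obj)^[n] A))‖))
        Filter.atTop (nhds (Real.log lam)) ∧
      ¬ Filter.Tendsto
        (fun n : ℕ => (n : ℝ)⁻¹ *
          Real.log (‖σ.Z (cl ((Φ.functor.obj)^[n] A))‖))
        Filter.atTop (nhds (-(Real.log lam))) := by
  intro φ A hA hA₀
  have hlam : 1 < lam := hΦ.1
  obtain ⟨δ, hδ, h_le_norm⟩ := σ.exists_pos_le_norm_Z
  obtain ⟨a, b, ha, hb, h_bounds⟩ := hΦ.exists_norm_Z_iterate_bounds A
  have h_lower (n : ℕ) : δ ≤ ‖σ.Z (cl (Φ.functor.obj^[n] A))‖ := by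
    obtain ⟨ψ, hψ⟩ := hΦ.exists_iterate_mem_P hA n
    exact h_le_norm ψ _ hψ (Φ.not_isZero_iterate_obj hA₀ n)
  have hb_pos : 0 < b := by
    refine hb.lt_of_ne' fun hb₀ => ?_
    have h_small : Tendsto (fun n : ℕ => a * lam⁻¹ ^ n + b * lam ^ n) atTop (𝓝 0) := by
      simpa [hb₀] using (tendsto_pow_atTop_nhds_zero_of_lt_one (by positivity)
        (inv_lt_one_of_one_lt₀ hlam)).const_mul a
    obtain ⟨n, hn⟩ := (h_small.eventually (gt_mem_nhds hδ)).exists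
    linarith [h_lower n, (h_bounds n).2]
  have h_upper (n : ℕ) : ‖σ.Z (cl (Φ.functor.obj^[n] A))‖ ≤ (a + b) * lam ^ n := by
    have : lam⁻¹ ^ n ≤ lam ^ n :=
      pow_le_pow_left₀ (by positivity) ((inv_lt_one_of_one_lt₀ hlam).le.trans hlam.le) n
    nlinarith [(h_bounds n).2]
  have h_lim := tendsto_inv_mul_log_of_le_of_le hb_pos (by positivity) (fun n => (h_bounds n).1)
    h_upper
  exact ⟨h_lim, fun h => by linarith [tendsto_nhds_unique h_lim h, Real.log_pos hlam]⟩

theorem charge_growth_of_semistable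
    -- `cl` is (induced by) a group homomorphism `K₀(D) → Γ`
    (hcl : ∀ T : Triangle C, (T ∈ distTriang C) → cl T.obj₂ = cl T.obj₁ + cl T.obj₃)
    (σ : BridgelandStab C Γ cl) (Φ : C ≌ C) (lam : ℝ)
    (hΦ : IsDHKKPseudoAnosov σ Φ lam) :
    ∀ (φ : ℝ) (A : C), A ∈ σ.P φ → ¬ IsZero A →
      Filter.Tendsto
        (fun n : ℕ => (n : ℝ)⁻¹ *
          Real.log (‖σ.Z (cl ((Φ.functor.obj)^[n] A))‖))
        Filter.atTop (nhds (Real.log lam)) ∧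
      ¬ Filter.Tendsto
        (fun n : ℕ => (n : ℝ)⁻¹ *
          Real.log (‖σ.Z (cl ((Φ.functor.obj)^[n] A))‖))
        Filter.atTop (nhds (-(Real.log lam))) :=
  charge_growth_of_semistable_general σ Φ lam hΦ
end
end

section
/- Let D be a triangulated category, D′ ⊆ D a thick triangulated subcategory, and q : D → D/D′ the Verdier quotient functor. Let μ be a mass function on D/D′ and q*μ its pullback to D, defined by (q*μ)(E) := μ(q(E)). Then the induced relative mass function of q*μ with respect to D′ equals q*μ itself: i_*^{D′}(q*μ) = q*μ, i.e., for every object E of D, (q*μ)(E) equals the infimum, over all towers 0 = X₀ → X₁ → ⋯ → X_n ≅ E ⊕ E′ (for some object E′) with cone of X_{i−1} → X_i isomorphic to A_i, of Σ_{A_i ∉ D′} (q*μ)(A_i). -/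
/-!
STATEMENT 9: For a thick triangulated subcategory `D' ⊆ D` with Verdier quotient functor
`q : D → D/D'` and a mass function `μ` on `D/D'`, the induced relative mass function of the
pullback `q*μ` with respect to `D'` equals `q*μ` itself.
-/

open CategoryTheory CategoryTheory.Limits CategoryTheory.Pretriangulated ZeroObject

noncomputable section

universe v u v₂ u₂

section Defs

variable (C : Type u) [Category.{v} C] [Preadditive C] [HasZeroObject C]
  [HasShift C ℤ] [∀ n : ℤ, (shiftFunctor C n).Additive] [Pretriangulated C] [HasBinaryBiproducts C]

/-- A mass function on a triangulated category. -/
structure MassFunction : Type (max u v) where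
  toFun : C → ℝ
  nonneg : ∀ E : C, 0 ≤ toFun E
  subadd : ∀ T : Triangle C, (T ∈ distTriang C) → toFun T.obj₂ ≤ toFun T.obj₁ + toFun T.obj₃
  shift_inv : ∀ E : C, toFun (E⟦(1:ℤ)⟧) = toFun E
  le_biprod : ∀ E F : C, toFun E ≤ toFun (E ⊞ F)
  zero : toFun (0 : C) = 0

/-- A thick triangulated subcategory, encoded as a set of objects. -/
structure IsThick (S : Set C) : Prop where
  zero_mem : (0 : C) ∈ S
  iso_closed : ∀ ⦃E F : C⦄, (E ≅ F) → E ∈ S → F ∈ S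
  shift_mem : ∀ E : C, E ∈ S → E⟦(1:ℤ)⟧ ∈ S
  unshift_mem : ∀ E : C, E⟦(1:ℤ)⟧ ∈ S → E ∈ S
  cone_mem : ∀ T : Triangle C, (T ∈ distTriang C) → T.obj₁ ∈ S → T.obj₂ ∈ S → T.obj₃ ∈ S
  summand_mem : ∀ E F : C, (E ⊞ F) ∈ S → E ∈ S

/-- The class of morphisms whose cone lies in `S`; the Verdier quotient `D/D'` is the
localization of `D` at this class. -/
def coneInW (S : Set C) : MorphismProperty C := fun X _Y f =>
  ∃ (Z : C) (g : _Y ⟶ Z) (h : Z ⟶ X⟦(1:ℤ)⟧), (Triangle.mk f g h ∈ distTriang C) ∧ Z ∈ S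

/-- The set of sums `Σ_{A_i ∉ D'} ν(A_i)` over all towers
`0 = X₀ → X₁ → ⋯ → X_n ≅ E ⊕ E'` with distinguished triangles
`X_{i-1} → X_i → A_i → X_{i-1}[1]`. -/
def towerSums (S : Set C) (ν : C → ℝ) (E : C) : Set ℝ :=
  {r : ℝ | ∃ (n : ℕ) (X : Fin (n + 1) → C) (A : Fin n → C) (E' : C),
    IsZero (X 0) ∧ Nonempty (X (Fin.last n) ≅ E ⊞ E') ∧
    (∀ i : Fin n, ∃ (f : X i.castSucc ⟶ X i.succ) (g : X i.succ ⟶ A i)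
      (h : A i ⟶ (X i.castSucc)⟦(1:ℤ)⟧), Triangle.mk f g h ∈ distTriang C) ∧
    r = ∑ i : Fin n, Set.indicator Sᶜ ν (A i)}

/-- The induced relative mass function `i_*^{D'} ν`. -/
def inducedMass (S : Set C) (ν : C → ℝ) (E : C) : ℝ := sInf (towerSums C S ν E)

end Defs

section Aux

variable {D : Type u₂} [Category.{v₂} D] [Preadditive D] [HasZeroObject D]
  [HasShift D ℤ] [∀ n : ℤ, (shiftFunctor D n).Additive] [Pretriangulated D]
  [HasBinaryBiproducts D]

lemma MassFunction.congr_iso (μ : MassFunction D) {A B : D} (e : A ≅ B) :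
    μ.toFun A = μ.toFun B := by
  have key : ∀ (X Y : D) (e : X ≅ Y), μ.toFun Y ≤ μ.toFun X := by
    intro X Y e
    have hT : Triangle.mk e.hom (0 : Y ⟶ 0) (0 : (0:D) ⟶ X⟦(1:ℤ)⟧) ∈ distTriang D := by
      refine Pretriangulated.isomorphic_distinguished _
        (Pretriangulated.contractible_distinguished X) _ ?_
      exact Triangle.isoMk _ _ (Iso.refl _) e.symm (Iso.refl _)
        (by show e.hom ≫ e.inv = 𝟙 X ≫ 𝟙 X; simp)
        (by show (0 : Y ⟶ 0) ≫ 𝟙 (0:D) = e.inv ≫ (0 : X ⟶ 0); simp)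
        (by show (0 : (0:D) ⟶ X⟦(1:ℤ)⟧) ≫ (shiftFunctor D (1:ℤ)).map (𝟙 X) = 𝟙 (0:D) ≫ (0 : (0:D) ⟶ X⟦(1:ℤ)⟧); simp)
    have := μ.subadd _ hT
    simp only [Triangle.mk_obj₁, Triangle.mk_obj₂, Triangle.mk_obj₃, μ.zero] at this
    linarith
  exact le_antisymm (key B A e.symm) (key A B e)

lemma MassFunction.eq_zero_of_isZero (μ : MassFunction D) {A : D} (h : IsZero A) :
    μ.toFun A = 0 := by
  rw [μ.congr_iso h.isoZero, μ.zero]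

end Aux

theorem inducedMass_pullback_eq (C : Type u) [Category.{v} C] [Preadditive C]
    [HasZeroObject C] [HasShift C ℤ] [∀ n : ℤ, (shiftFunctor C n).Additive]
    [Pretriangulated C] [HasBinaryBiproducts C]
    (Q : Type u₂) [Category.{v₂} Q] [Preadditive Q] [HasZeroObject Q]
    [HasShift Q ℤ] [∀ n : ℤ, (shiftFunctor Q n).Additive] [Pretriangulated Q]
    [HasBinaryBiproducts Q]
    (S : Set C) (hS : IsThick C S)
    -- `q : D → D/D'` is the Verdier quotient functor: an exact (triangulated) functor
    -- realizing the localization of `D` at the morphisms whose cone lies in `D'`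
    (q : C ⥤ Q) [q.CommShift (ℤ)] [q.IsTriangulated] [q.IsLocalization (coneInW C S)]
    (μ : MassFunction Q) (E : C) :
    inducedMass C S (fun X => μ.toFun (q.obj X)) E = μ.toFun (q.obj E) := by
  classical
  set ν : C → ℝ := fun X => μ.toFun (q.obj X) with hν
  have hν0 : ∀ X : C, 0 ≤ ν X := fun X => μ.nonneg _
  have hmem : Set.indicator Sᶜ ν E ∈ towerSums C S ν E := by
    refine ⟨1, ![0, E], ![E], 0, ?_, ⟨?_⟩, ?_, ?_⟩
    · simpa using isZero_zero C
    · show E ≅ E ⊞ (0 : C)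
      exact
        { hom := biprod.lift (𝟙 E) 0
          inv := biprod.fst
          hom_inv_id := by simp
          inv_hom_id := by
            apply biprod.hom_ext
            · simp
            · apply (isZero_zero C).eq_of_tgt }
    · intro i
      fin_cases i
      exact ⟨0, 𝟙 E, 0, Pretriangulated.contractible_distinguished₁ E⟩
    · simp
  have hq0 : ∀ {A : C}, A ∈ S → IsZero (q.obj A) := by
    intro A hA
    have hW : coneInW C S (0 : A ⟶ 0) :=
      ⟨A⟦(1:ℤ)⟧, 0, 𝟙 _, Pretriangulated.contractible_distinguished₂ A, hS.shift_mem A hA⟩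
    have hiso : IsIso (q.map (0 : A ⟶ 0)) := Localization.inverts q (coneInW C S) _ hW
    rw [Functor.map_zero] at hiso
    rw [IsZero.iff_id_eq_zero, ← IsIso.hom_inv_id (0 : q.obj A ⟶ q.obj 0), zero_comp]
  have hA_le : ∀ A : C, μ.toFun (q.obj A) ≤ Set.indicator Sᶜ ν A := by
    intro A
    by_cases hA : A ∈ S
    · rw [Set.indicator_of_notMem (by simpa using hA), μ.eq_zero_of_isZero (hq0 hA)]
    · rw [Set.indicator_of_mem (by simpa using hA)]
  have hbdd : ∀ r ∈ towerSums C S ν E, 0 ≤ r := by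
    rintro r ⟨n, X, A, E', -, -, -, rfl⟩
    exact Finset.sum_nonneg fun i _ => Set.indicator_nonneg (fun x _ => hν0 x) _
  have hlb : ∀ r ∈ towerSums C S ν E, ν E ≤ r := by
    rintro r ⟨n, X, A, E', hX0, ⟨e⟩, htri, rfl⟩
    have key : ∀ k : ℕ, ∀ hk : k < n + 1, μ.toFun (q.obj (X ⟨k, hk⟩)) ≤
        ∑ i : Fin n, if i.val < k then Set.indicator Sᶜ ν (A i) else 0 := by
      intro k
      induction k with
      | zero =>
        intro hk
        simp only [Nat.not_lt_zero, if_false, Finset.sum_const_zero]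
        exact le_of_eq (μ.eq_zero_of_isZero (Functor.map_isZero q hX0))
      | succ k ih =>
        intro hk
        have hk' : k < n + 1 := Nat.lt_of_succ_lt hk
        have hkn : k < n := Nat.succ_lt_succ_iff.mp hk
        obtain ⟨f, g, h, hT⟩ := htri ⟨k, hkn⟩
        have hsub := μ.subadd _ (q.map_distinguished _ hT)
        have step : μ.toFun (q.obj (X ⟨k+1, hk⟩)) ≤
            μ.toFun (q.obj (X ⟨k, hk'⟩)) + Set.indicator Sᶜ ν (A ⟨k, hkn⟩) :=
          le_trans hsub (add_le_add le_rfl (hA_le _))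
        refine le_trans step ?_
        have hsplit : ∀ i : Fin n,
            (if i.val < k + 1 then Set.indicator Sᶜ ν (A i) else 0)
            = (if i.val < k then Set.indicator Sᶜ ν (A i) else 0)
              + (if i = ⟨k, hkn⟩ then Set.indicator Sᶜ ν (A i) else 0) := by
          intro i
          rcases lt_trichotomy i.val k with hik | hik | hik
          · rw [if_pos (Nat.lt_succ_of_lt hik), if_pos hik,
              if_neg (by simp only [Fin.ext_iff]; omega), add_zero]
          · rw [if_pos (by omega), if_neg (by omega),
              if_pos (by simp only [Fin.ext_iff]; omega), zero_add]
          · rw [if_neg (by omega), if_neg (by omega),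
              if_neg (by simp only [Fin.ext_iff]; omega), add_zero]
        rw [Finset.sum_congr rfl (fun i _ => hsplit i), Finset.sum_add_distrib,
          Finset.sum_ite_eq' Finset.univ (⟨k, hkn⟩ : Fin n), if_pos (Finset.mem_univ _)]
        exact add_le_add (ih hk') le_rfl
    have last := key n n.lt_succ_self
    have hfull : (∑ i : Fin n, if i.val < n then Set.indicator Sᶜ ν (A i) else 0)
        = ∑ i : Fin n, Set.indicator Sᶜ ν (A i) :=
      Finset.sum_congr rfl fun i _ => if_pos i.isLt
    rw [hfull] at last
    have hfin : ν E ≤ μ.toFun (q.obj (X (Fin.last n))) := by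
      haveI : PreservesBinaryBiproducts q :=
        preservesBinaryBiproducts_of_preservesBiproducts q
      calc ν E = μ.toFun (q.obj E) := rfl
        _ ≤ μ.toFun (q.obj E ⊞ q.obj E') := μ.le_biprod _ _
        _ = μ.toFun (q.obj (E ⊞ E')) := (μ.congr_iso (q.mapBiprod E E')).symm
        _ = μ.toFun (q.obj (X (Fin.last n))) := (μ.congr_iso (q.mapIso e)).symm
    exact le_trans hfin last
  refine le_antisymm ?_ (le_csInf ⟨_, hmem⟩ hlb)
  refine le_trans (csInf_le ⟨0, fun r hr => hbdd r hr⟩ hmem) ?_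
  by_cases h : E ∈ Sᶜ <;> simp [Set.indicator, h, hν0 E, hν, μ.nonneg]
end
end

section
/- Let A = [[1,1],[0,1]] and B = [[1,0],[1,1]] in SL(2, ℤ). Let M = A^{a₁}·B^{b₁}·A^{a₂}·B^{b₂}·⋯·A^{a_p}·B^{b_p} with all exponents a_i, b_i nonnegative integers, and suppose at least one a_i ≥ 1 and at least one b_j ≥ 1 (equivalently, M is neither a power of A nor a power of B). Then the trace of M satisfies trace(M) ≥ 1 + Σ_{i=1}^{p} (a_i + b_i); in particular trace(M) ≥ 3. -/
set_option maxHeartbeats 1000000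


/-!
STATEMENT 10: For `A = [[1,1],[0,1]]`, `B = [[1,0],[1,1]]` in `SL(2,ℤ)` and
`M = A^{a₁}B^{b₁}⋯A^{a_p}B^{b_p}` with nonnegative exponents, at least one `a_i ≥ 1` and at
least one `b_j ≥ 1`, one has `trace(M) ≥ 1 + Σ(a_i + b_i)`; in particular `trace(M) ≥ 3`.
-/

open Matrix

/-- The elementary matrix `A = [[1,1],[0,1]]`. -/
def Amat : Matrix (Fin 2) (Fin 2) ℤ := !![1, 1; 0, 1]

/-- The elementary matrix `B = [[1,0],[1,1]]`. -/
def Bmat : Matrix (Fin 2) (Fin 2) ℤ := !![1, 0; 1, 1]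



lemma Amat_pow (n : ℕ) : Amat ^ n = !![1, (n : ℤ); 0, 1] := by
  induction n with
  | zero => simp [Matrix.one_fin_two]
  | succ k ih =>
      rw [pow_succ, ih, Amat]
      push_cast
      ext i j
      fin_cases i <;> fin_cases j <;>
        simp [Matrix.mul_apply, Fin.sum_univ_two] <;> ring

lemma Bmat_pow (n : ℕ) : Bmat ^ n = !![1, 0; (n : ℤ), 1] := by
  induction n with
  | zero => simp [Matrix.one_fin_two]
  | succ k ih =>
      rw [pow_succ, ih, Bmat]
      push_cast
      ext i j
      fin_cases i <;> fin_cases j <;>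
        simp [Matrix.mul_apply, Fin.sum_univ_two] <;> ring

lemma factor_eq (a b : ℕ) :
    Amat ^ a * Bmat ^ b = !![1 + (a : ℤ) * b, (a : ℤ); (b : ℤ), 1] := by
  rw [Amat_pow, Bmat_pow]
  ext i j
  fin_cases i <;> fin_cases j <;>
    simp [Matrix.mul_apply, Fin.sum_univ_two] <;> ring

lemma key (l : List (ℕ × ℕ)) :
    ∀ M s t, M = (l.map fun q => Amat ^ q.1 * Bmat ^ q.2).prod →
      s = (l.map fun q => ((q.1 : ℤ))).sum →
      t = (l.map fun q => ((q.2 : ℤ))).sum →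
      0 ≤ s ∧ 0 ≤ t ∧
      1 ≤ M 0 0 ∧ 0 ≤ M 0 1 ∧ 0 ≤ M 1 0 ∧ 1 ≤ M 1 1 ∧
      (1 ≤ s → 1 ≤ M 0 1) ∧ (1 ≤ t → 1 ≤ M 1 0) ∧
      (t = 0 → M 0 0 = 1 ∧ M 1 0 = 0 ∧ M 1 1 = 1 ∧ M 0 1 = s) ∧
      (s = 0 → M 0 0 = 1 ∧ M 0 1 = 0 ∧ M 1 1 = 1 ∧ M 1 0 = t) ∧
      (1 ≤ s → 1 ≤ t → 1 + s + t ≤ M 0 0 + M 1 1) := by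
  induction l with
  | nil =>
      intro M s t hM hs ht
      simp at hM hs ht
      subst hM hs ht
      simp [Matrix.one_apply]
  | cons q l ih =>
      obtain ⟨A, B⟩ := q
      intro M s t hM hs ht
      set N : Matrix (Fin 2) (Fin 2) ℤ := (l.map fun q => Amat ^ q.1 * Bmat ^ q.2).prod with hN
      set s' : ℤ := (l.map fun q => ((q.1 : ℤ))).sum with hs'
      set t' : ℤ := (l.map fun q => ((q.2 : ℤ))).sum with ht'
      obtain ⟨hs0, ht0, hx, hy, hz, hw, hsy, htz, hTz, hSz, htr⟩ := ih N s' t' rfl rfl rfl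
      have hMe : M = (Amat ^ A * Bmat ^ B) * N := by
        rw [hM]; simp [hN]
      have hA0 : (0 : ℤ) ≤ (A : ℤ) := Int.natCast_nonneg A
      have hB0 : (0 : ℤ) ≤ (B : ℤ) := Int.natCast_nonneg B
      have hse : s = (A : ℤ) + s' := by rw [hs]; simp [hs']
      have hte : t = (B : ℤ) + t' := by rw [ht]; simp [ht']
      have e00 : M 0 0 = (1 + (A : ℤ) * B) * N 0 0 + (A : ℤ) * N 1 0 := by
        rw [hMe, factor_eq]; simp [Matrix.mul_apply, Fin.sum_univ_two]
      have e01 : M 0 1 = (1 + (A : ℤ) * B) * N 0 1 + (A : ℤ) * N 1 1 := by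
        rw [hMe, factor_eq]; simp [Matrix.mul_apply, Fin.sum_univ_two]
      have e10 : M 1 0 = (B : ℤ) * N 0 0 + N 1 0 := by
        rw [hMe, factor_eq]; simp [Matrix.mul_apply, Fin.sum_univ_two]
      have e11 : M 1 1 = (B : ℤ) * N 0 1 + N 1 1 := by
        rw [hMe, factor_eq]; simp [Matrix.mul_apply, Fin.sum_univ_two]
      have hy' : (0:ℤ) ≤ N 0 1 := hy
      have hz' : (0:ℤ) ≤ N 1 0 := hz
      have hx0 : (0:ℤ) ≤ N 0 0 := by linarith
      have hw0 : (0:ℤ) ≤ N 1 1 := by linarith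
      have hAB : (0:ℤ) ≤ (A:ℤ) * B := mul_nonneg hA0 hB0
      refine ⟨by linarith, by linarith, ?_, ?_, ?_, ?_, ?_, ?_, ?_, ?_, ?_⟩
      · rw [e00]
        nlinarith [mul_nonneg hAB (by linarith : (0:ℤ) ≤ N 0 0 - 1), mul_nonneg hA0 hz']
      · rw [e01]
        nlinarith [mul_nonneg hAB hy', mul_nonneg hA0 hw0]
      · rw [e10]
        nlinarith [mul_nonneg hB0 hx0]
      · rw [e11]
        nlinarith [mul_nonneg hB0 hy']
      · -- 1 ≤ s → 1 ≤ M 0 1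
        intro h1
        rw [e01]
        rcases le_or_gt 1 s' with h | h
        · have hy1 := hsy h
          nlinarith [mul_nonneg hAB (by linarith : (0:ℤ) ≤ N 0 1 - 1), mul_nonneg hA0 hw0]
        · have hs'0 : s' = 0 := le_antisymm (by linarith) hs0
          have hA1 : (1 : ℤ) ≤ (A : ℤ) := by rw [hse, hs'0] at h1; linarith
          obtain ⟨n00, n01, n11, n10⟩ := hSz hs'0
          rw [n01, n11]
          nlinarith [mul_nonneg hAB (le_refl (0:ℤ))]
      · intro h1
        rw [e10]
        rcases le_or_gt 1 t' with h | h
        · have hz1 := htz h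
          nlinarith [mul_nonneg hB0 hx0]
        · have ht'0 : t' = 0 := le_antisymm (by linarith) ht0
          have hB1 : (1 : ℤ) ≤ (B : ℤ) := by rw [hte, ht'0] at h1; linarith
          obtain ⟨n00, n10, n11, n01⟩ := hTz ht'0
          rw [n00, n10]
          nlinarith [mul_nonneg hB0 (le_refl (0:ℤ))]
      · -- t = 0
        intro h0
        have hB' : (B : ℤ) = 0 := by
          rw [hte] at h0; linarith
        have ht'0 : t' = 0 := by rw [hte] at h0; linarith
        obtain ⟨n00, n10, n11, n01⟩ := hTz ht'0
        rw [e00, e01, e10, e11, hB', n00, n10, n11, n01, hse]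
        constructor
        · ring
        refine ⟨by ring, by ring, by ring⟩
      · intro h0
        have hA' : (A : ℤ) = 0 := by rw [hse] at h0; linarith
        have hs'0 : s' = 0 := by rw [hse] at h0; linarith
        obtain ⟨n00, n01, n11, n10⟩ := hSz hs'0
        rw [e00, e01, e10, e11, hA', n00, n10, n11, n01, hte]
        refine ⟨by ring, by ring, by ring, by ring⟩
      · -- trace bound
        intro h1s h1t
        rw [e00, e11, hse, hte]
        rcases le_or_gt 1 s' with hS | hS
        · rcases le_or_gt 1 t' with hT | hT
          · have hy1 := hsy hS
            have hz1 := htz hT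
            have htr' := htr hS hT
            nlinarith [mul_nonneg hAB hx0,
              mul_nonneg hA0 (by linarith : (0:ℤ) ≤ N 1 0 - 1),
              mul_nonneg hB0 (by linarith : (0:ℤ) ≤ N 0 1 - 1)]
          · -- t' = 0, so B ≥ 1
            have ht'0 : t' = 0 := le_antisymm (by linarith) ht0
            have hB1 : (1 : ℤ) ≤ (B : ℤ) := by
              rw [hte, ht'0] at h1t; linarith
            obtain ⟨n00, n10, n11, n01⟩ := hTz ht'0
            rw [n00, n10, n11, n01, ht'0]
            nlinarith [mul_nonneg hA0 (by linarith : (0:ℤ) ≤ (B:ℤ) - 1),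
              mul_nonneg (by linarith : (0:ℤ) ≤ (B:ℤ) - 1) (by linarith : (0:ℤ) ≤ s' - 1)]
        · have hs'0 : s' = 0 := le_antisymm (by linarith) hs0
          have hA1 : (1 : ℤ) ≤ (A : ℤ) := by rw [hse, hs'0] at h1s; linarith
          obtain ⟨n00, n01, n11, n10⟩ := hSz hs'0
          rw [n00, n10, n11, n01, hs'0]
          rcases le_or_gt 1 t' with hT | hT
          · nlinarith [mul_nonneg hB0 (by linarith : (0:ℤ) ≤ (A:ℤ) - 1),
              mul_nonneg (by linarith : (0:ℤ) ≤ (A:ℤ) - 1) (by linarith : (0:ℤ) ≤ t' - 1)]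
          · have ht'0 : t' = 0 := le_antisymm (by linarith) ht0
            have hB1 : (1 : ℤ) ≤ (B : ℤ) := by rw [hte, ht'0] at h1t; linarith
            rw [ht'0]
            nlinarith [mul_nonneg (by linarith : (0:ℤ) ≤ (A:ℤ) - 1)
              (by linarith : (0:ℤ) ≤ (B:ℤ) - 1)]

theorem trace_ge_one_add_sum_exponents (p : ℕ) (a b : Fin p → ℕ)
    (ha : ∃ i, 1 ≤ a i) (hb : ∃ j, 1 ≤ b j)
    (M : Matrix (Fin 2) (Fin 2) ℤ)
    (hM : M = (List.ofFn (fun i : Fin p => Amat ^ (a i) * Bmat ^ (b i))).prod) :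
    (1 + ∑ i : Fin p, ((a i : ℤ) + (b i : ℤ)) ≤ M.trace) ∧ (3 : ℤ) ≤ M.trace := by
  set l : List (ℕ × ℕ) := List.ofFn (fun i : Fin p => (a i, b i)) with hl
  have hMl : M = (l.map fun q => Amat ^ q.1 * Bmat ^ q.2).prod := by
    rw [hM, hl, List.map_ofFn]
    rfl
  have hsl : (∑ i : Fin p, (a i : ℤ)) = (l.map fun q => ((q.1 : ℤ))).sum := by
    rw [hl, List.map_ofFn, List.sum_ofFn]
    rfl
  have htl : (∑ i : Fin p, (b i : ℤ)) = (l.map fun q => ((q.2 : ℤ))).sum := by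
    rw [hl, List.map_ofFn, List.sum_ofFn]
    rfl
  obtain ⟨_, _, _, _, _, _, _, _, _, _, htr⟩ := key l M _ _ hMl hsl htl
  obtain ⟨i, hi⟩ := ha
  obtain ⟨j, hj⟩ := hb
  have h1s : (1 : ℤ) ≤ ∑ i : Fin p, (a i : ℤ) := by
    calc (1 : ℤ) ≤ (a i : ℤ) := by exact_mod_cast hi
    _ ≤ ∑ i : Fin p, (a i : ℤ) :=
      Finset.single_le_sum (fun k _ => Int.natCast_nonneg (a k)) (Finset.mem_univ i)
  have h1t : (1 : ℤ) ≤ ∑ i : Fin p, (b i : ℤ) := by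
    calc (1 : ℤ) ≤ (b j : ℤ) := by exact_mod_cast hj
    _ ≤ ∑ i : Fin p, (b i : ℤ) :=
      Finset.single_le_sum (fun k _ => Int.natCast_nonneg (b k)) (Finset.mem_univ j)
  have := htr h1s h1t
  rw [Matrix.trace_fin_two]
  rw [Finset.sum_add_distrib]
  constructor <;> linarith
end

section
/- Let M ∈ SL(2, ℤ) with t := trace(M) ≥ 3, and set λ = (t + √(t² − 4))/2 and λ′ = (t − √(t² − 4))/2. Let W : ℝ² → ℂ be an ℝ-linear map whose kernel contains no eigenvector of M. Then for every nonzero x ∈ ℚ², lim_{n→∞} (1/n)·log |W(Mⁿ·x)| = log λ. -/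
/-!
For the real matrix `A` of `M`, Cayley–Hamilton gives `A² = (λ + λ′) A − λλ′`, so
`Aⁿ x = λⁿ y + λ′ⁿ z`, where `y = (λ − λ′)⁻¹ (A x − λ′ x)` is a `λ`-eigenvector and `z` a
`λ′`-eigenvector. As `(t − 1)² < t² − 4 < t²`, the eigenvalue `λ′` is irrational, so the rational
vector `x` is not a `λ′`-eigenvector and `y ≠ 0`; hence `W y ≠ 0` and
`|W (Aⁿ x)| = λⁿ |W y + (λ′/λ)ⁿ W z|`, where the second factor tends to `|W y| > 0`.
-/

open Matrix Filter Topology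

theorem Matrix.sq_eq_trace_smul_sub_det_smul {R : Type*} [CommRing R]
    (A : Matrix (Fin 2) (Fin 2) R) : A ^ 2 = A.trace • A - A.det • 1 := by
  ext i j
  fin_cases i <;> fin_cases j <;>
    simp [sq, mul_apply, trace_fin_two, det_fin_two] <;> ring

section QuadraticRelation

variable {R : Type*} [CommRing R] {n : Type*} [Fintype n] [DecidableEq n]
  {A : Matrix n n R} {a b : R}

theorem Matrix.pow_mulVec_of_mulVec_eq_smul {x : n → R} (h : A *ᵥ x = a • x) (k : ℕ) :
    A ^ k *ᵥ x = a ^ k • x := by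
  induction k with
  | zero => simp
  | succ k ih => rw [pow_succ, ← mulVec_mulVec, h, mulVec_smul, ih, smul_smul, pow_succ']

theorem Matrix.mulVec_mulVec_sub_smul_of_sq_eq (hA : A ^ 2 = (a + b) • A - (a * b) • 1)
    (x : n → R) : A *ᵥ (A *ᵥ x - b • x) = a • (A *ᵥ x - b • x) := by
  rw [mulVec_sub, mulVec_mulVec, ← sq, hA, sub_mulVec, smul_mulVec, smul_mulVec,
    one_mulVec, mulVec_smul]
  module

end QuadraticRelation

theorem Matrix.pow_mulVec_eq_of_sq_eq {K : Type*} [Field K] {n : Type*} [Fintype n]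
    [DecidableEq n] {A : Matrix n n K} {a b : K} (hA : A ^ 2 = (a + b) • A - (a * b) • 1) (hab : a ≠ b)
    (x : n → K) (k : ℕ) :
    A ^ k *ᵥ x = a ^ k • (a - b)⁻¹ • (A *ᵥ x - b • x) + b ^ k • (b - a)⁻¹ • (A *ᵥ x - a • x) := by
  have hA' : A ^ 2 = (b + a) • A - (b * a) • 1 := by rwa [add_comm, mul_comm]
  rw [smul_comm _ (a - b)⁻¹, smul_comm _ (b - a)⁻¹,
    ← pow_mulVec_of_mulVec_eq_smul (mulVec_mulVec_sub_smul_of_sq_eq hA x),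
    ← pow_mulVec_of_mulVec_eq_smul (mulVec_mulVec_sub_smul_of_sq_eq hA' x),
    ← mulVec_smul, ← mulVec_smul, ← mulVec_add]
  congr 1
  have : a - b ≠ 0 := sub_ne_zero.2 hab
  have : b - a ≠ 0 := sub_ne_zero.2 hab.symm
  ext i
  simp only [Pi.add_apply, Pi.smul_apply, Pi.sub_apply, smul_eq_mul]
  field_simp
  ring

theorem Matrix.map_ratCast_mulVec_ne_smul {n : Type*} [Fintype n] (A : Matrix n n ℚ)
    {v : n → ℚ} (hv : v ≠ 0) {μ : ℝ} (hμ : Irrational μ) :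
    A.map (Rat.cast : ℚ → ℝ) *ᵥ (fun i => (v i : ℝ)) ≠ μ • fun i => (v i : ℝ) := by
  intro h
  obtain ⟨i, hi⟩ := Function.ne_iff.1 hv
  have hcast := RingHom.map_mulVec (Rat.castHom ℝ) A v i
  simp only [Rat.coe_castHom, Function.comp_def] at hcast
  have hi' := congrFun h i
  rw [← hcast] at hi'
  refine hμ ⟨(A *ᵥ v) i / v i, ?_⟩
  simp only [Rat.cast_div, Pi.smul_apply, smul_eq_mul] at hi' ⊢
  rw [div_eq_iff (by exact_mod_cast hi), hi']

theorem Int.not_isSquare_sq_sub_four {t : ℤ} (ht : 3 ≤ t) : ¬IsSquare (t ^ 2 - 4) := by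
  rintro ⟨r, hr⟩
  have hr' : t ^ 2 - 4 = |r| ^ 2 := by rw [sq_abs, hr, sq]
  have h1 : |r| < t := by nlinarith [abs_nonneg r]
  have h2 : t - 1 < |r| := by nlinarith [abs_nonneg r]
  omega

theorem irrational_sqrt_sq_sub_four {t : ℤ} (ht : 3 ≤ t) : Irrational √((t : ℝ) ^ 2 - 4) := by
  exact_mod_cast (irrational_sqrt_intCast_iff_of_nonneg (by nlinarith : (0 : ℤ) ≤ t ^ 2 - 4)).2
    (Int.not_isSquare_sq_sub_four ht)

theorem tendsto_inv_mul_log_norm_pow_smul_add_pow_smul {E : Type*} [NormedAddCommGroup E]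
    [NormedSpace ℝ E] {a b : ℝ} (hba : |b| < a) {x : E} (hx : x ≠ 0) (y : E) :
    Tendsto (fun k : ℕ => (k : ℝ)⁻¹ * Real.log ‖a ^ k • x + b ^ k • y‖) atTop
      (𝓝 (Real.log a)) := by
  have ha : 0 < a := (abs_nonneg b).trans_lt hba
  have hr : Tendsto (fun k : ℕ => (b / a) ^ k) atTop (𝓝 0) :=
    tendsto_pow_atTop_nhds_zero_of_abs_lt_one (by rwa [abs_div, abs_of_pos ha, div_lt_one ha])
  have hlim : Tendsto (fun k : ℕ => ‖x + (b / a) ^ k • y‖) atTop (𝓝 ‖x‖) := by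
    simpa using ((tendsto_const_nhds (x := x)).add (hr.smul_const y)).norm
  have hx' : 0 < ‖x‖ := norm_pos_iff.2 hx
  have hfactor : ∀ k : ℕ, ‖a ^ k • x + b ^ k • y‖ = a ^ k * ‖x + (b / a) ^ k • y‖ := by
    intro k
    calc ‖a ^ k • x + b ^ k • y‖ = ‖a ^ k • (x + (b / a) ^ k • y)‖ := by
          rw [smul_add, smul_smul, ← mul_pow, mul_div_cancel₀ _ ha.ne']
      _ = a ^ k * ‖x + (b / a) ^ k • y‖ := by
          rw [norm_smul, Real.norm_of_nonneg (by positivity)]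
  have hev : ∀ᶠ k : ℕ in atTop, Real.log a + (k : ℝ)⁻¹ * Real.log ‖x + (b / a) ^ k • y‖ =
      (k : ℝ)⁻¹ * Real.log ‖a ^ k • x + b ^ k • y‖ := by
    filter_upwards [hlim.eventually (eventually_gt_nhds hx'), eventually_ne_atTop 0] with k hk hk0
    rw [hfactor, Real.log_mul (by positivity) hk.ne', Real.log_pow, mul_add, ← mul_assoc,
      inv_mul_cancel₀ (by exact_mod_cast hk0), one_mul]
  refine Tendsto.congr' hev ?_
  simpa using tendsto_const_nhds.add
    (tendsto_inv_atTop_zero.comp tendsto_natCast_atTop_atTop |>.mul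
      ((Real.continuousAt_log hx'.ne').tendsto.comp hlim))

theorem charge_growth_of_rational_vectors (M : Matrix (Fin 2) (Fin 2) ℤ)
    (hdet : M.det = 1) (ht : 3 ≤ M.trace)
    (W : (Fin 2 → ℝ) →ₗ[ℝ] ℂ)
    -- the kernel of `W` contains no eigenvector of `M`
    (hker : ∀ x : Fin 2 → ℝ, x ≠ 0 →
      (∃ μ : ℝ, (M.map (Int.cast : ℤ → ℝ)).mulVec x = μ • x) → W x ≠ 0) :
    ∀ v : Fin 2 → ℚ, v ≠ 0 →
      Filter.Tendsto
        (fun n : ℕ => (n : ℝ)⁻¹ *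
          Real.log ‖W (((M.map (Int.cast : ℤ → ℝ)) ^ n).mulVec
            (fun i => (v i : ℝ)))‖)
        Filter.atTop
        (nhds (Real.log (((M.trace : ℝ) + Real.sqrt ((M.trace : ℝ) ^ 2 - 4)) / 2))) := by
  intro v hv
  set A := M.map (Int.cast : ℤ → ℝ)
  set x : Fin 2 → ℝ := fun i => (v i : ℝ)
  set t : ℝ := (M.trace : ℝ)
  set s := √(t ^ 2 - 4)
  set a := (t + s) / 2 with ha
  set b := (t - s) / 2 with hb
  have ht3 : (3 : ℝ) ≤ t := by simp only [t]; exact_mod_cast ht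
  have hs : s ^ 2 = t ^ 2 - 4 := Real.sq_sqrt (by nlinarith)
  have hs0 : 0 < s := Real.sqrt_pos.2 (by nlinarith)
  have hba : |b| < a := abs_lt.2 ⟨by linarith, by linarith⟩
  have hab : a ≠ b := by linarith
  have hA : A ^ 2 = (a + b) • A - (a * b) • 1 := by
    have htr : A.trace = a + b := by
      rw [show a + b = t by linarith]
      simp [A, t, trace_fin_two]
    have hdetA : A.det = a * b := by
      rw [show a * b = 1 by linear_combination (-1 / 4) * hs]
      simpa [hdet] using ((Int.castRingHom ℝ).map_det M).symm
    rw [← htr, ← hdetA, sq_eq_trace_smul_sub_det_smul]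
  have hb_irr : Irrational b := by
    simpa using ((irrational_sqrt_sq_sub_four ht).intCast_sub M.trace).div_natCast two_ne_zero
  have hAq : A = (M.map (Int.cast : ℤ → ℚ)).map (Rat.cast : ℚ → ℝ) := by ext; simp [A]
  have hy : A *ᵥ x - b • x ≠ 0 := sub_ne_zero.2 (hAq ▸ map_ratCast_mulVec_ne_smul _ hv hb_irr)
  have hWy : W ((a - b)⁻¹ • (A *ᵥ x - b • x)) ≠ 0 :=
    hker _ (smul_ne_zero (inv_ne_zero (sub_ne_zero.2 hab)) hy)
      ⟨a, by rw [mulVec_smul, mulVec_mulVec_sub_smul_of_sq_eq hA, smul_comm]⟩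
  have key := tendsto_inv_mul_log_norm_pow_smul_add_pow_smul hba hWy
    (W ((b - a)⁻¹ • (A *ᵥ x - a • x)))
  simpa only [← map_smul, ← map_add, ← pow_mulVec_eq_of_sq_eq hA hab] using key
end

section
/- Let M be the 4×4 rational matrix M = [[6, −20/3, 5, −5], [−1, 1, 0, 0], [1/2, −1, 1, 0], [−1/6, 1/2, −1, 1]]. Then the characteristic polynomial of M is x⁴ − 9x³ + 11x² − 9x + 1, and the eigenvalues of M over ℂ are exactly the four distinct numbers λ₁ = (9 + 3√5 + √(110 + 54√5))/4, λ₂ = (9 − 3√5 + i√(−110 + 54√5))/4, λ₃ = (9 − 3√5 − i√(−110 + 54√5))/4, and λ₄ = (9 + 3√5 − √(110 + 54√5))/4. Moreover λ₁ is real with λ₁ > 1, λ₁·λ₄ = 1, λ₂·λ₃ = 1, and λ₁ is the spectral radius of M. -/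
/-!
The characteristic polynomial is palindromic, so it splits as `(x² − s x + 1)(x² − t x + 1)` with
`s + t = st = 9`, i.e. `s, t = (9 ± 3√5)/2`, and the two roots of each factor multiply to `1`.
The first factor has discriminant `(110 + 54√5)/4 > 0` and real roots `λ₁ > 1 > λ₄`; the second
has discriminant `(110 − 54√5)/4 < 0`, so its roots `λ₂, λ₃ = λ̄₂` lie on the unit circle.
Hence every eigenvalue other than `λ₁` has modulus at most `1 < λ₁`.
-/

open Matrix Polynomial

noncomputable section

/-- The matrix `M`. -/
def Mquintic : Matrix (Fin 4) (Fin 4) ℚ :=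
  !![6, -20/3, 5, -5;
     -1, 1, 0, 0;
     1/2, -1, 1, 0;
     -1/6, 1/2, -1, 1]

/-- `λ₁ = (9 + 3√5 + √(110 + 54√5))/4`. -/
def lam1 : ℂ := (((9 + 3 * Real.sqrt 5 + Real.sqrt (110 + 54 * Real.sqrt 5)) / 4 : ℝ) : ℂ)

/-- `λ₂ = (9 − 3√5 + i√(−110 + 54√5))/4`. -/
def lam2 : ℂ := (((9 - 3 * Real.sqrt 5) / 4 : ℝ) : ℂ) +
  ((Real.sqrt (-110 + 54 * Real.sqrt 5) / 4 : ℝ) : ℂ) * Complex.I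

/-- `λ₃ = (9 − 3√5 − i√(−110 + 54√5))/4`. -/
def lam3 : ℂ := (((9 - 3 * Real.sqrt 5) / 4 : ℝ) : ℂ) -
  ((Real.sqrt (-110 + 54 * Real.sqrt 5) / 4 : ℝ) : ℂ) * Complex.I

/-- `λ₄ = (9 + 3√5 − √(110 + 54√5))/4`. -/
def lam4 : ℂ := (((9 + 3 * Real.sqrt 5 - Real.sqrt (110 + 54 * Real.sqrt 5)) / 4 : ℝ) : ℂ)


theorem sub_mul_sub_eq_of_add_eq_of_mul_eq_one {R : Type*} [CommRing R] {z w s : R}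
    (hs : z + w = s) (hp : z * w = 1) (μ : R) : (μ - z) * (μ - w) = μ ^ 2 - s * μ + 1 := by
  linear_combination (-μ) * hs + hp

theorem Mquintic_charpoly : Mquintic.charpoly = X ^ 4 - 9 * X ^ 3 + 11 * X ^ 2 - 9 * X + 1 := by
  refine Polynomial.funext fun x => ?_
  simp [Matrix.charpoly, Matrix.det_succ_row_zero, Fin.sum_univ_succ, charmatrix_apply, Mquintic,
    Fin.succAbove, Matrix.submatrix]
  ring

theorem mem_spectrum_Mquintic_map_iff (μ : ℂ) :
    μ ∈ spectrum ℂ (Mquintic.map (Rat.cast : ℚ → ℂ)) ↔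
      μ ^ 4 - 9 * μ ^ 3 + 11 * μ ^ 2 - 9 * μ + 1 = 0 := by
  rw [Matrix.mem_spectrum_iff_isRoot_charpoly,
    show Mquintic.map (Rat.cast : ℚ → ℂ) = Mquintic.map (Rat.castHom ℂ) from rfl,
    Matrix.charpoly_map, Mquintic_charpoly]
  simp

theorem sq_sqrt_five : √5 ^ 2 = 5 := Real.sq_sqrt (by norm_num)

theorem one_hundred_ten_lt_mul_sqrt_five : (110 : ℝ) < 54 * √5 := by
  nlinarith [sq_sqrt_five, Real.sqrt_nonneg 5]

theorem sq_sqrt_add_mul_sqrt_five : √(110 + 54 * √5) ^ 2 = 110 + 54 * √5 :=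
  Real.sq_sqrt (by linarith [one_hundred_ten_lt_mul_sqrt_five])

theorem sq_sqrt_neg_add_mul_sqrt_five : √(-110 + 54 * √5) ^ 2 = -110 + 54 * √5 :=
  Real.sq_sqrt (by linarith [one_hundred_ten_lt_mul_sqrt_five])

theorem lam1_add_lam4 : lam1 + lam4 = (((9 + 3 * √5) / 2 : ℝ) : ℂ) := by
  simp only [lam1, lam4, ← Complex.ofReal_add]
  ring_nf

theorem lam1_mul_lam4 : lam1 * lam4 = 1 := by
  rw [lam1, lam4, ← Complex.ofReal_mul, ← Complex.ofReal_one]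
  congr 1
  linear_combination (9 / 16) * sq_sqrt_five - (1 / 16) * sq_sqrt_add_mul_sqrt_five

theorem lam3_eq_conj_lam2 : lam3 = starRingEnd ℂ lam2 := by
  rw [lam2, lam3, map_add, map_mul, Complex.conj_ofReal, Complex.conj_ofReal, Complex.conj_I]
  ring

theorem lam2_add_lam3 : lam2 + lam3 = (((9 - 3 * √5) / 2 : ℝ) : ℂ) := by
  simp only [lam2, lam3]
  push_cast
  ring

theorem normSq_lam2 : Complex.normSq lam2 = 1 := by
  rw [lam2, Complex.normSq_add_mul_I]
  linear_combination (9 / 16) * sq_sqrt_five + (1 / 16) * sq_sqrt_neg_add_mul_sqrt_five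

theorem lam2_mul_lam3 : lam2 * lam3 = 1 := by
  rw [lam3_eq_conj_lam2, Complex.mul_conj, normSq_lam2, Complex.ofReal_one]

theorem norm_lam2 : ‖lam2‖ = 1 := by
  rw [Complex.norm_def, normSq_lam2, Real.sqrt_one]

theorem norm_lam3 : ‖lam3‖ = 1 := by
  rw [lam3_eq_conj_lam2, Complex.norm_conj, norm_lam2]

theorem lam1_im : lam1.im = 0 := Complex.ofReal_im _

theorem one_lt_lam1_re : 1 < lam1.re := by
  rw [lam1, Complex.ofReal_re]
  linarith [Real.sqrt_nonneg 5, Real.sqrt_nonneg (110 + 54 * √5)]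

theorem one_le_norm_lam1 : 1 ≤ ‖lam1‖ :=
  one_lt_lam1_re.le.trans (Complex.re_le_norm lam1)

theorem norm_lam4_le_one : ‖lam4‖ ≤ 1 := by
  have h : ‖lam1‖ * ‖lam4‖ = 1 := by rw [← norm_mul, lam1_mul_lam4, norm_one]
  nlinarith [one_le_norm_lam1, norm_nonneg lam4]

theorem quartic_eq_prod_sub_lam (μ : ℂ) : μ ^ 4 - 9 * μ ^ 3 + 11 * μ ^ 2 - 9 * μ + 1 =
    (μ - lam1) * (μ - lam4) * ((μ - lam2) * (μ - lam3)) := by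
  rw [sub_mul_sub_eq_of_add_eq_of_mul_eq_one lam1_add_lam4 lam1_mul_lam4,
    sub_mul_sub_eq_of_add_eq_of_mul_eq_one lam2_add_lam3 lam2_mul_lam3]
  have h5 : ((√5 : ℝ) : ℂ) ^ 2 = 5 := by exact_mod_cast sq_sqrt_five
  push_cast
  linear_combination (9 / 4 * μ ^ 2) * h5

theorem spectrum_Mquintic_map :
    spectrum ℂ (Mquintic.map (Rat.cast : ℚ → ℂ)) = {lam1, lam2, lam3, lam4} := by
  ext μ
  rw [mem_spectrum_Mquintic_map_iff, quartic_eq_prod_sub_lam]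
  simp only [Set.mem_insert_iff, Set.mem_singleton_iff, mul_eq_zero, sub_eq_zero]
  tauto

theorem lam2_im_pos : 0 < lam2.im := by
  have h : 0 < √(-110 + 54 * √5) :=
    Real.sqrt_pos.mpr (by linarith [one_hundred_ten_lt_mul_sqrt_five])
  simpa [lam2] using h

theorem lam3_im : lam3.im = -lam2.im := by
  rw [lam3_eq_conj_lam2, Complex.conj_im]

theorem lam4_im : lam4.im = 0 := Complex.ofReal_im _

theorem lam4_re_lt_lam1_re : lam4.re < lam1.re := by
  simp only [lam1, lam4, Complex.ofReal_re]
  have h : 0 < √(110 + 54 * √5) :=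
    Real.sqrt_pos.mpr (by linarith [one_hundred_ten_lt_mul_sqrt_five])
  linarith

theorem lam_pairwise_ne :
    lam1 ≠ lam2 ∧ lam1 ≠ lam3 ∧ lam1 ≠ lam4 ∧ lam2 ≠ lam3 ∧ lam2 ≠ lam4 ∧ lam3 ≠ lam4 := by
  refine ⟨?_, ?_, ne_of_apply_ne Complex.re lam4_re_lt_lam1_re.ne', ?_, ?_, ?_⟩ <;>
    refine ne_of_apply_ne Complex.im ?_ <;>
    simp only [lam1_im, lam3_im, lam4_im] <;> linarith [lam2_im_pos]

theorem quintic_matrix_eigenvalues :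
    -- the characteristic polynomial is `x⁴ − 9x³ + 11x² − 9x + 1`
    Mquintic.charpoly = X ^ 4 - 9 * X ^ 3 + 11 * X ^ 2 - 9 * X + 1 ∧
    -- the eigenvalues over `ℂ` are exactly `λ₁, λ₂, λ₃, λ₄`
    spectrum ℂ (Mquintic.map (Rat.cast : ℚ → ℂ)) = {lam1, lam2, lam3, lam4} ∧
    -- these four numbers are pairwise distinct
    (lam1 ≠ lam2 ∧ lam1 ≠ lam3 ∧ lam1 ≠ lam4 ∧ lam2 ≠ lam3 ∧ lam2 ≠ lam4 ∧ lam3 ≠ lam4) ∧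
    -- `λ₁` is real and `λ₁ > 1`
    (lam1.im = 0 ∧ 1 < lam1.re) ∧
    -- `λ₁λ₄ = 1` and `λ₂λ₃ = 1`
    (lam1 * lam4 = 1 ∧ lam2 * lam3 = 1) ∧
    -- `λ₁` is the spectral radius of `M`
    (∀ μ ∈ spectrum ℂ (Mquintic.map (Rat.cast : ℚ → ℂ)), ‖μ‖ ≤ ‖lam1‖) := by
  refine ⟨Mquintic_charpoly, spectrum_Mquintic_map, lam_pairwise_ne, ⟨lam1_im, one_lt_lam1_re⟩,
    ⟨lam1_mul_lam4, lam2_mul_lam3⟩, ?_⟩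
  rw [spectrum_Mquintic_map]
  rintro μ (rfl | rfl | rfl | rfl)
  · exact le_rfl
  · exact norm_lam2 ▸ one_le_norm_lam1
  · exact norm_lam3 ▸ one_le_norm_lam1
  · exact norm_lam4_le_one.trans one_le_norm_lam1

end
end
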